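/- Let T be a connected graded S-ring and P an S-subbimodule, P_n := Σ_{i+j+k=n} T^{≤i} P^{≤j} T^{≤k}. The following are equivalent: (1) P is of PBW-type (i.e. LH(⟨P⟩) ⊆ ⟨LH(P)⟩); (2) P_{n+1} ∩ T^{≤n} ⊆ P_n for all n (Jacobi conditions); (3) P_m ∩ T^{≤n} ⊆ P_n for all n and all m > n; (4) ⟨P⟩ ∩ T^{≤n} = P_n for all n. -/

import Mathlib

/-! The filtration `P_n` exhausts `⟨P⟩`, and its leading parts in degree `n` are exactly the
degree-`n` elements of `⟨LH(P)⟩`: a generator `a * LH(b) * c` with `a`, `c` homogeneous is the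
leading part of `a * b * c ∈ P_{deg a + deg b + deg c}`. Hence (4) gives (1) at once, and
conversely under (1) an element `x ∈ ⟨P⟩ ∩ T^{≤n}` has its degree-`n` part in `⟨LH(P)⟩`, so it
agrees in degree `n` with some `w ∈ P_n`, and induction on `n` applied to `x - w` gives (4).
The Jacobi conditions (2) chain to (3), and (3) is (4) because every element of `⟨P⟩` lies in
some `P_m`. -/

variable {T : Type*} [Ring T]

/-- Projection onto the degree `n` homogeneous component. -/
noncomputable def projFun (𝒜 : ℕ → AddSubgroup T) [GradedRing 𝒜] (n : ℕ) (x : T) : T :=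
  (DirectSum.decompose 𝒜 x n : T)

lemma projFun_add (𝒜 : ℕ → AddSubgroup T) [GradedRing 𝒜] (n : ℕ) (x y : T) :
    projFun 𝒜 n (x + y) = projFun 𝒜 n x + projFun 𝒜 n y := by
  unfold projFun
  rw [DirectSum.decompose_add, DirectSum.add_apply, AddSubgroup.coe_add]

lemma projFun_neg (𝒜 : ℕ → AddSubgroup T) [GradedRing 𝒜] (n : ℕ) (x : T) :
    projFun 𝒜 n (-x) = - projFun 𝒜 n x := by
  unfold projFun
  rw [DirectSum.decompose_neg, DFinsupp.neg_apply, AddSubgroup.coe_neg]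

/-- The `S`-subbimodule `T^{≤ n}` of elements of degree at most `n`. -/
noncomputable def degLE (𝒜 : ℕ → AddSubgroup T) [GradedRing 𝒜] (n : ℕ) : AddSubgroup T where
  carrier := {x | ∀ m, n < m → projFun 𝒜 m x = 0}
  zero_mem' := by
    intro m hm
    unfold projFun
    rw [DirectSum.decompose_zero, DirectSum.zero_apply, AddSubgroup.coe_zero]
  add_mem' := by
    intro a b ha hb m hm
    rw [projFun_add, ha m hm, hb m hm, add_zero]
  neg_mem' := by
    intro a ha m hm
    rw [projFun_neg, ha m hm, neg_zero]

/-- `y` is the leading homogeneous part of `x`. -/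
def IsLH (𝒜 : ℕ → AddSubgroup T) [GradedRing 𝒜] (x y : T) : Prop :=
  (x = 0 ∧ y = 0) ∨
    ∃ m, y = projFun 𝒜 m x ∧ y ≠ 0 ∧ ∀ k, m < k → projFun 𝒜 k x = 0

/-- `LH(X)`, the set of leading homogeneous parts of elements of `X`. -/
def leadSet (𝒜 : ℕ → AddSubgroup T) [GradedRing 𝒜] (X : Set T) : Set T :=
  {y | ∃ x ∈ X, IsLH 𝒜 x y}

/-- An additive subgroup of `T` which is an `S = T^0`-subbimodule. -/
def IsSubbimodule (𝒜 : ℕ → AddSubgroup T) (X : AddSubgroup T) : Prop :=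
  ∀ s ∈ 𝒜 0, ∀ x ∈ X, s * x ∈ X ∧ x * s ∈ X

/-- `T` is strongly graded: `T^{n+1} = T^1 T^n`. -/
def StronglyGraded (𝒜 : ℕ → AddSubgroup T) : Prop :=
  ∀ n, (𝒜 (n + 1) : Set T) ⊆
    ↑(AddSubgroup.closure {y : T | ∃ a ∈ 𝒜 1, ∃ b ∈ 𝒜 n, y = a * b})

/-- The canonical filtration `P_n = Σ_{i+j+k=n} T^{≤i} P^{≤j} T^{≤k}` of the ideal `⟨P⟩`. -/
noncomputable def Pcan (𝒜 : ℕ → AddSubgroup T) [GradedRing 𝒜] (P : AddSubgroup T) (n : ℕ) :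
    AddSubgroup T :=
  AddSubgroup.closure {x : T | ∃ i j k : ℕ, i + j + k = n ∧
    ∃ a ∈ degLE 𝒜 i, ∃ b ∈ P ⊓ degLE 𝒜 j, ∃ c ∈ degLE 𝒜 k, x = a * b * c}

lemma inter_subset_of_succ_inter_subset {α : Type*} {F D : ℕ → Set α} (hD : Monotone D)
    (h : ∀ n, F (n + 1) ∩ D n ⊆ F n) {n m : ℕ} (hnm : n < m) : F m ∩ D n ⊆ F n := by
  induction m, hnm using Nat.le_induction with
  | base => exact h n
  | succ m hnm ih => exact fun x hx => ih ⟨h m ⟨hx.1, hD (Nat.le_of_succ_le hnm) hx.2⟩, hx.2⟩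

lemma TwoSidedIdeal.mem_addSubgroup_of_mem_span {R : Type*} [Ring R] {s : Set R}
    {G : AddSubgroup R} (h : ∀ a, ∀ y ∈ s, ∀ c, a * y * c ∈ G) {z : R}
    (hz : z ∈ TwoSidedIdeal.span s) : z ∈ G := by
  rw [TwoSidedIdeal.mem_span_iff_mem_addSubgroup_closure] at hz
  refine (AddSubgroup.closure_le G).mpr ?_ hz
  rintro _ ⟨_, ⟨a, -, y, hy, rfl⟩, c, -, rfl⟩
  exact h a y hy c

section Graded

open Finset

variable (𝒜 : ℕ → AddSubgroup T) [GradedRing 𝒜]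

lemma projFun_zero (n : ℕ) : projFun 𝒜 n 0 = 0 := by
  simp [projFun]

lemma projFun_sub (n : ℕ) (x y : T) :
    projFun 𝒜 n (x - y) = projFun 𝒜 n x - projFun 𝒜 n y := by
  rw [sub_eq_add_neg, projFun_add, projFun_neg, ← sub_eq_add_neg]

lemma projFun_mem (n : ℕ) (x : T) : projFun 𝒜 n x ∈ 𝒜 n :=
  SetLike.coe_mem _

lemma projFun_of_mem {n : ℕ} {x : T} (hx : x ∈ 𝒜 n) : projFun 𝒜 n x = x :=
  DirectSum.decompose_of_mem_same 𝒜 hx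

lemma projFun_of_mem_of_ne {n m : ℕ} {x : T} (hx : x ∈ 𝒜 n) (h : n ≠ m) :
    projFun 𝒜 m x = 0 :=
  DirectSum.decompose_of_mem_ne 𝒜 hx h

lemma projFun_mul (n : ℕ) (x y : T) :
    projFun 𝒜 n (x * y) =
      ∑ pq ∈ antidiagonal n, projFun 𝒜 pq.1 x * projFun 𝒜 pq.2 y := by
  rw [projFun, DirectSum.decompose_mul, DirectSum.coe_mul_apply_eq_sum_antidiagonal]
  rfl

lemma eq_zero_of_forall_projFun_eq_zero {x : T} (h : ∀ n, projFun 𝒜 n x = 0) : x = 0 := by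
  refine (DirectSum.decompose 𝒜).injective ?_
  rw [DirectSum.decompose_zero]
  exact DFinsupp.ext fun n => Subtype.ext (h n)

lemma mem_degLE_of_mem {n : ℕ} {x : T} (hx : x ∈ 𝒜 n) : x ∈ degLE 𝒜 n :=
  fun _ hm => projFun_of_mem_of_ne 𝒜 hx hm.ne

lemma degLE_mono : Monotone (degLE 𝒜) :=
  fun _ _ h _ hx m hm => hx m (lt_of_le_of_lt h hm)

lemma exists_mem_degLE (x : T) : ∃ n, x ∈ degLE 𝒜 n := by
  classical
  refine ⟨(DirectSum.decompose 𝒜 x).support.sup id, fun m hm => ?_⟩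
  have : m ∉ (DirectSum.decompose 𝒜 x).support :=
    fun hmem => hm.not_ge (le_sup (f := id) hmem)
  rw [DFinsupp.notMem_support_iff] at this
  rw [projFun, this, ZeroMemClass.coe_zero]

lemma mem_degLE_of_projFun_eq_zero {n : ℕ} {x : T} (hx : x ∈ degLE 𝒜 (n + 1))
    (hx' : projFun 𝒜 (n + 1) x = 0) : x ∈ degLE 𝒜 n := by
  intro m hm
  rcases (Nat.succ_le_of_lt hm).eq_or_lt with rfl | hm'
  · exact hx'
  · exact hx m hm'

lemma eq_zero_of_mem_degLE_zero {x : T} (hx : x ∈ degLE 𝒜 0) (hx' : projFun 𝒜 0 x = 0) :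
    x = 0 :=
  eq_zero_of_forall_projFun_eq_zero 𝒜 fun n => n.eq_zero_or_pos.elim (· ▸ hx') (hx n)

lemma projFun_mul_eq_zero_of_ne {i j m : ℕ} {x y : T} (hx : x ∈ degLE 𝒜 i)
    (hy : y ∈ degLE 𝒜 j) (hm : i + j ≤ m) {pq : ℕ × ℕ} (hpq : pq ∈ antidiagonal m)
    (hne : pq ≠ (i, j)) : projFun 𝒜 pq.1 x * projFun 𝒜 pq.2 y = 0 := by
  rw [HasAntidiagonal.mem_antidiagonal] at hpq
  rcases Nat.lt_or_ge i pq.1 with hi | hi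
  · rw [hx _ hi, zero_mul]
  · have hj : j < pq.2 := by
      by_contra! hj
      exact hne (Prod.ext (by omega) (by omega))
    rw [hy _ hj, mul_zero]

lemma degLE_mul {i j : ℕ} {x y : T} (hx : x ∈ degLE 𝒜 i) (hy : y ∈ degLE 𝒜 j) :
    x * y ∈ degLE 𝒜 (i + j) := by
  intro m hm
  rw [projFun_mul]
  refine sum_eq_zero fun pq hpq => projFun_mul_eq_zero_of_ne 𝒜 hx hy hm.le hpq ?_
  rintro rfl
  exact hm.ne (HasAntidiagonal.mem_antidiagonal.mp hpq)

lemma projFun_mul_of_mem_degLE {i j : ℕ} {x y : T} (hx : x ∈ degLE 𝒜 i) (hy : y ∈ degLE 𝒜 j) :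
    projFun 𝒜 (i + j) (x * y) = projFun 𝒜 i x * projFun 𝒜 j y := by
  rw [projFun_mul, sum_eq_single (i, j)
    (fun pq hpq hne => projFun_mul_eq_zero_of_ne 𝒜 hx hy le_rfl hpq hne)
    (fun h => (h (HasAntidiagonal.mem_antidiagonal.mpr rfl)).elim)]

lemma projFun_mem_leadSet {X : Set T} {n : ℕ} {x : T} (hX : x ∈ X) (hx : x ∈ degLE 𝒜 n)
    (hx' : projFun 𝒜 n x ≠ 0) : projFun 𝒜 n x ∈ leadSet 𝒜 X :=
  ⟨x, hX, Or.inr ⟨n, rfl, hx', hx⟩⟩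

end Graded

section Pcan

variable (𝒜 : ℕ → AddSubgroup T) [GradedRing 𝒜] (P : AddSubgroup T)

lemma mul_mul_mem_Pcan {i j k : ℕ} {a b c : T} (ha : a ∈ degLE 𝒜 i) (hbP : b ∈ P)
    (hb : b ∈ degLE 𝒜 j) (hc : c ∈ degLE 𝒜 k) : a * b * c ∈ Pcan 𝒜 P (i + j + k) :=
  AddSubgroup.subset_closure ⟨i, j, k, rfl, a, ha, b, ⟨hbP, hb⟩, c, hc, rfl⟩

lemma Pcan_mono : Monotone (Pcan 𝒜 P) := by
  intro n m hnm
  rw [Pcan, AddSubgroup.closure_le]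
  rintro _ ⟨i, j, k, rfl, a, ha, b, ⟨hbP, hb⟩, c, hc, rfl⟩
  have := mul_mul_mem_Pcan 𝒜 P (degLE_mono 𝒜 (i.le_add_right (m - (i + j + k))) ha) hbP hb hc
  rwa [show i + (m - (i + j + k)) + j + k = m by omega] at this

lemma Pcan_subset_span_inter_degLE (n : ℕ) :
    (Pcan 𝒜 P n : Set T) ⊆ (TwoSidedIdeal.span (P : Set T) : Set T) ∩ (degLE 𝒜 n : Set T) := by
  change Pcan 𝒜 P n ≤ AddSubgroup.ofClass (TwoSidedIdeal.span (P : Set T)) ⊓ degLE 𝒜 n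
  rw [Pcan, AddSubgroup.closure_le]
  rintro _ ⟨i, j, k, rfl, a, ha, b, ⟨hbP, hb⟩, c, hc, rfl⟩
  refine ⟨?_, degLE_mul 𝒜 (degLE_mul 𝒜 ha hb) hc⟩
  exact TwoSidedIdeal.mul_mem_right _ _ _
    (TwoSidedIdeal.mul_mem_left _ _ _ (TwoSidedIdeal.subset_span hbP))

lemma exists_mem_Pcan_of_mem_span {x : T} (hx : x ∈ TwoSidedIdeal.span (P : Set T)) :
    ∃ n, x ∈ Pcan 𝒜 P n := by
  rw [← AddSubgroup.mem_iSup_of_directed (Pcan_mono 𝒜 P).directed_le]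
  refine TwoSidedIdeal.mem_addSubgroup_of_mem_span (fun a b hb c => ?_) hx
  obtain ⟨i, ha⟩ := exists_mem_degLE 𝒜 a
  obtain ⟨j, hb'⟩ := exists_mem_degLE 𝒜 b
  obtain ⟨k, hc⟩ := exists_mem_degLE 𝒜 c
  exact AddSubgroup.mem_iSup_of_mem _ (mul_mul_mem_Pcan 𝒜 P ha hb hb' hc)

lemma exists_mem_Pcan_projFun_eq_of_mem_span_leadSet {v : T}
    (hv : v ∈ TwoSidedIdeal.span (leadSet 𝒜 (P : Set T))) (m : ℕ) :
    ∃ w ∈ Pcan 𝒜 P m, projFun 𝒜 m w = projFun 𝒜 m v := by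
  suffices v ∈ ((Pcan 𝒜 P m).map (GradedRing.proj 𝒜 m)).comap (GradedRing.proj 𝒜 m) from this
  refine TwoSidedIdeal.mem_addSubgroup_of_mem_span (fun a g hg c => ?_) hv
  obtain ⟨b, hbP, ⟨-, rfl⟩ | ⟨j, rfl, -, hb⟩⟩ := hg
  · simp
  induction a using DirectSum.Decomposition.inductionOn 𝒜 with
  | zero => simp
  | add a a' ha ha' => simpa [add_mul] using add_mem ha ha'
  | @homogeneous i a =>
  induction c using DirectSum.Decomposition.inductionOn 𝒜 with
  | zero => simp
  | add c c' hc hc' => simpa [mul_add] using add_mem hc hc'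
  | @homogeneous k c =>
  have hlead : (a : T) * projFun 𝒜 j b * c = projFun 𝒜 (i + j + k) (a * b * c) := by
    rw [projFun, projFun, DirectSum.coe_decompose_mul_add_of_right_mem 𝒜 c.2,
      DirectSum.coe_decompose_mul_add_of_left_mem 𝒜 a.2]
  have hmem : (a : T) * projFun 𝒜 j b * c ∈ 𝒜 (i + j + k) :=
    SetLike.mul_mem_graded (SetLike.mul_mem_graded a.2 (projFun_mem 𝒜 j b)) c.2
  show ∃ w ∈ Pcan 𝒜 P m, projFun 𝒜 m w = projFun 𝒜 m (a * projFun 𝒜 j b * c)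
  obtain rfl | hne := eq_or_ne (i + j + k) m
  · refine ⟨a * b * c, ?_, by rw [projFun_of_mem 𝒜 hmem, hlead]⟩
    exact mul_mul_mem_Pcan 𝒜 P (mem_degLE_of_mem 𝒜 a.2) hbP hb (mem_degLE_of_mem 𝒜 c.2)
  · exact ⟨0, zero_mem _, by rw [projFun_zero, projFun_of_mem_of_ne 𝒜 hmem hne]⟩

lemma projFun_mem_span_leadSet_of_mem_Pcan {m : ℕ} {z : T} (hz : z ∈ Pcan 𝒜 P m) :
    projFun 𝒜 m z ∈ TwoSidedIdeal.span (leadSet 𝒜 (P : Set T)) := by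
  suffices z ∈ (AddSubgroup.ofClass (TwoSidedIdeal.span (leadSet 𝒜 (P : Set T)))).comap
      (GradedRing.proj 𝒜 m) from this
  refine (AddSubgroup.closure_le _).mpr ?_ hz
  rintro _ ⟨i, j, k, rfl, a, ha, b, ⟨hbP, hb⟩, c, hc, rfl⟩
  change projFun 𝒜 (i + j + k) (a * b * c) ∈ TwoSidedIdeal.span (leadSet 𝒜 (P : Set T))
  rw [projFun_mul_of_mem_degLE 𝒜 (degLE_mul 𝒜 ha hb) hc, projFun_mul_of_mem_degLE 𝒜 ha hb]
  by_cases hb0 : projFun 𝒜 j b = 0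
  · simp [hb0]
  exact TwoSidedIdeal.mul_mem_right _ _ _ (TwoSidedIdeal.mul_mem_left _ _ _
    (TwoSidedIdeal.subset_span (projFun_mem_leadSet 𝒜 hbP hb hb0)))

end Pcan

section PBW

variable (𝒜 : ℕ → AddSubgroup T) [GradedRing 𝒜] (P : AddSubgroup T)

lemma exists_mem_Pcan_projFun_sub_eq_zero
    (hPBW : leadSet 𝒜 (TwoSidedIdeal.span (P : Set T) : Set T)
      ⊆ (TwoSidedIdeal.span (leadSet 𝒜 (P : Set T)) : Set T))
    {n : ℕ} {x : T} (hxI : x ∈ TwoSidedIdeal.span (P : Set T)) (hxD : x ∈ degLE 𝒜 n) :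
    ∃ w ∈ Pcan 𝒜 P n, projFun 𝒜 n (x - w) = 0 := by
  have hlead : projFun 𝒜 n x ∈ TwoSidedIdeal.span (leadSet 𝒜 (P : Set T)) := by
    by_cases h0 : projFun 𝒜 n x = 0
    · rw [h0]
      exact zero_mem _
    · exact hPBW (projFun_mem_leadSet 𝒜 hxI hxD h0)
  obtain ⟨w, hw, hwx⟩ := exists_mem_Pcan_projFun_eq_of_mem_span_leadSet 𝒜 P hlead n
  refine ⟨w, hw, ?_⟩
  rw [projFun_sub, hwx, projFun_of_mem 𝒜 (projFun_mem 𝒜 n x), sub_self]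

lemma mem_Pcan_of_mem_span_of_mem_degLE
    (hPBW : leadSet 𝒜 (TwoSidedIdeal.span (P : Set T) : Set T)
      ⊆ (TwoSidedIdeal.span (leadSet 𝒜 (P : Set T)) : Set T)) (n : ℕ) {x : T}
    (hxI : x ∈ TwoSidedIdeal.span (P : Set T)) (hxD : x ∈ degLE 𝒜 n) : x ∈ Pcan 𝒜 P n := by
  induction n generalizing x with
  | zero =>
    obtain ⟨w, hw, hxw⟩ := exists_mem_Pcan_projFun_sub_eq_zero 𝒜 P hPBW hxI hxD
    obtain ⟨-, hwD⟩ := Pcan_subset_span_inter_degLE 𝒜 P 0 hw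
    rwa [sub_eq_zero.mp (eq_zero_of_mem_degLE_zero 𝒜 (sub_mem hxD hwD) hxw)]
  | succ n ih =>
    obtain ⟨w, hw, hxw⟩ := exists_mem_Pcan_projFun_sub_eq_zero 𝒜 P hPBW hxI hxD
    obtain ⟨hwI, hwD⟩ := Pcan_subset_span_inter_degLE 𝒜 P (n + 1) hw
    have := ih (sub_mem hxI hwI) (mem_degLE_of_projFun_eq_zero 𝒜 (sub_mem hxD hwD) hxw)
    simpa using add_mem (Pcan_mono 𝒜 P n.le_succ this) hw

end PBW

theorem stmt_14_general (𝒜 : ℕ → AddSubgroup T) [GradedRing 𝒜]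
    (P : AddSubgroup T) :
    [ leadSet 𝒜 (TwoSidedIdeal.span (P : Set T) : Set T)
        ⊆ (TwoSidedIdeal.span (leadSet 𝒜 (P : Set T)) : Set T),
      ∀ n, (Pcan 𝒜 P (n + 1) : Set T) ∩ (degLE 𝒜 n : Set T) ⊆ (Pcan 𝒜 P n : Set T),
      ∀ n m, n < m → (Pcan 𝒜 P m : Set T) ∩ (degLE 𝒜 n : Set T) ⊆ (Pcan 𝒜 P n : Set T),
      ∀ n, (TwoSidedIdeal.span (P : Set T) : Set T) ∩ (degLE 𝒜 n : Set T)
        = (Pcan 𝒜 P n : Set T) ].TFAE := by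
  tfae_have 1 → 4 := fun hPBW n => Set.Subset.antisymm
    (fun _ ⟨hxI, hxD⟩ => mem_Pcan_of_mem_span_of_mem_degLE 𝒜 P hPBW n hxI hxD)
    (Pcan_subset_span_inter_degLE 𝒜 P n)
  tfae_have 4 → 1 := by
    rintro h4 _ ⟨x, hxI, ⟨-, rfl⟩ | ⟨m, rfl, -, hxD⟩⟩
    · exact zero_mem _
    · have hx : x ∈ (Pcan 𝒜 P m : Set T) := h4 m ▸ ⟨hxI, hxD⟩
      exact projFun_mem_span_leadSet_of_mem_Pcan 𝒜 P hx
  tfae_have 4 → 3 := fun h4 n _ _ x hx =>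
    h4 n ▸ ⟨(Pcan_subset_span_inter_degLE 𝒜 P _ hx.1).1, hx.2⟩
  tfae_have 3 → 2 := fun h3 n => h3 n (n + 1) n.lt_succ_self
  tfae_have 2 → 3 := fun h2 _ _ =>
    inter_subset_of_succ_inter_subset (F := fun n => Pcan 𝒜 P n)
      (fun _ _ h => degLE_mono 𝒜 h) h2
  tfae_have 3 → 4 := by
    refine fun h3 n => Set.Subset.antisymm (fun x ⟨hxI, hxD⟩ => ?_)
      (Pcan_subset_span_inter_degLE 𝒜 P n)
    obtain ⟨m, hm⟩ := exists_mem_Pcan_of_mem_span 𝒜 P hxI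
    rcases le_or_gt m n with hmn | hnm
    · exact Pcan_mono 𝒜 P hmn hm
    · exact h3 n m hnm ⟨hm, hxD⟩
  tfae_finish

/-- Theorem 2.8. -/
theorem stmt_14 (𝒜 : ℕ → AddSubgroup T) [GradedRing 𝒜]
    (P : AddSubgroup T) (hP : IsSubbimodule 𝒜 P) :
    [ leadSet 𝒜 (TwoSidedIdeal.span (P : Set T) : Set T)
        ⊆ (TwoSidedIdeal.span (leadSet 𝒜 (P : Set T)) : Set T),
      ∀ n, (Pcan 𝒜 P (n + 1) : Set T) ∩ (degLE 𝒜 n : Set T) ⊆ (Pcan 𝒜 P n : Set T),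
      ∀ n m, n < m → (Pcan 𝒜 P m : Set T) ∩ (degLE 𝒜 n : Set T) ⊆ (Pcan 𝒜 P n : Set T),
      ∀ n, (TwoSidedIdeal.span (P : Set T) : Set T) ∩ (degLE 𝒜 n : Set T)
        = (Pcan 𝒜 P n : Set T) ].TFAE :=
  stmt_14_general 𝒜 P
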